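/- Let Ω be a simply connected domain contained in the upper half-plane {Im w > 0}, convex in the positive direction and not contained in any horizontal strip, and let h be a Koenigs map onto Ω. If θ_Ω = Θ_Ω = π, then for every λ ∈ ℂ with λ ≠ 0 one has D(e^{λh}) = ∞; that is, the point spectrum on the Dirichlet space equals {0}. (Theorem 1.3(c).) -/

import Mathlib

open MeasureTheory Set Complex Metric
open scoped ENNReal NNReal

noncomputable section

/-- The Dirichlet integral `D(f) = ∫_𝔻 |f'(z)|² dA(z)` over the unit disk. -/
def dirichletIntegral (f : ℂ → ℂ) : ℝ≥0∞ :=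
  ∫⁻ z in ball (0 : ℂ) 1, (‖deriv f z‖₊ : ℝ≥0∞) ^ 2

/-- `h` is a Koenigs map onto `Ω`: an injective holomorphic map on the unit disk with image `Ω`. -/
def IsKoenigsMap (h : ℂ → ℂ) (Ω : Set ℂ) : Prop :=
  DifferentiableOn ℂ h (ball 0 1) ∧ InjOn h (ball 0 1) ∧ h '' ball 0 1 = Ω

/-- `Ω` is convex in the positive direction: `Ω + t ⊆ Ω` for all `t ≥ 0`. -/
def ConvexPosDir (Ω : Set ℂ) : Prop :=
  ∀ t : ℝ, 0 ≤ t → ∀ w ∈ Ω, w + (t : ℂ) ∈ Ω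

/-- The open angular sector `S(α,β) = {w ≠ 0 : α < arg w < β}` (principal argument). -/
def sector (a b : ℝ) : Set ℂ :=
  {w : ℂ | w ≠ 0 ∧ a < Complex.arg w ∧ Complex.arg w < b}

/-- The inner argument `θ_Ω` of a domain contained in the upper half-plane. -/
def innerArg (Ω : Set ℂ) : ℝ :=
  sSup ({0} ∪ {θ : ℝ | θ ∈ Ioc 0 Real.pi ∧ ∃ q : ℂ, (fun w => q + w) '' sector 0 θ ⊆ Ω})

/-- The outer argument `Θ_Ω` of a domain contained in the upper half-plane. -/
def outerArg (Ω : Set ℂ) : ℝ :=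
  sInf {θ : ℝ | θ ∈ Ioc 0 Real.pi ∧ ∃ q : ℂ, Ω ⊆ (fun w => q + w) '' sector 0 θ}

/-!
The change of variables `w = h z` gives `D(e^{λh}) = ∫_Ω |λ e^{λw}|² dA(w)`, so it suffices to
find in `Ω` an affine copy `q + c • H` of a half-strip `H = (1, ∞) × (-ε, ε)`, which has infinite
area, on which `Re (λ w)` is bounded below; this holds as soon as `Re (λ c) ≥ 0`. When `Re λ ≥ 0`
one takes `c = 1`: `Ω` is open and stable under positive translations. When `Re λ < 0` the
direction `c = -i λ̄` points into the upper half-plane and `λ c` is purely imaginary; since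
`θ_Ω = π`, `Ω` contains a translate of a sector of opening larger than `arg c`, and such a sector
contains a thin half-strip in the direction `c`.
-/

open scoped Real ComplexConjugate

theorem lintegral_image_eq_lintegral_enorm_deriv_sq_mul {s : Set ℂ} {f : ℂ → ℂ} (hs : IsOpen s)
    (hf : DifferentiableOn ℂ f s) (hinj : InjOn f s) (g : ℂ → ℝ≥0∞) :
    ∫⁻ w in f '' s, g w = ∫⁻ z in s, ‖deriv f z‖ₑ ^ 2 * g (f z) := by
  rw [lintegral_image_eq_lintegral_abs_det_fderiv_mul volume hs.measurableSet
    (fun z hz => ((hf.differentiableAt (hs.mem_nhds hz)).hasDerivAt.hasFDerivAt.restrictScalars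
      ℝ).hasFDerivWithinAt) hinj g]
  refine setLIntegral_congr_fun hs.measurableSet fun z _ => ?_
  simp [ContinuousLinearMap.det, LinearMap.det_restrictScalars, Algebra.norm_complex_eq,
    normSq_eq_norm_sq, ← ofReal_norm]

theorem Complex.volume_reProdIm {s t : Set ℝ} (hs : MeasurableSet s) (ht : MeasurableSet t) :
    volume (s ×ℂ t) = volume s * volume t := by
  rw [show s ×ℂ t = measurableEquivRealProd ⁻¹' (s ×ˢ t) from rfl,
    volume_preserving_equiv_real_prod.measure_preimage (hs.prod ht).nullMeasurableSet,
    Measure.volume_eq_prod, Measure.prod_prod]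

theorem Complex.arg_pos_of_im_pos {z : ℂ} (hz : 0 < z.im) : 0 < arg z :=
  (arg_nonneg_iff.2 hz.le).lt_of_ne' fun h => hz.ne' (arg_eq_zero_iff.1 h).2

namespace IsKoenigsMap

variable {h : ℂ → ℂ} {Ω : Set ℂ}

theorem nonempty (hh : IsKoenigsMap h Ω) : Ω.Nonempty :=
  hh.2.2 ▸ (nonempty_ball.2 one_pos).image h

theorem dirichletIntegral_comp {g : ℂ → ℂ} (hh : IsKoenigsMap h Ω) (hg : Differentiable ℂ g) :
    dirichletIntegral (fun z => g (h z)) = ∫⁻ w in Ω, ‖deriv g w‖ₑ ^ 2 := by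
  obtain ⟨hdiff, hinj, rfl⟩ := hh
  rw [dirichletIntegral, lintegral_image_eq_lintegral_enorm_deriv_sq_mul isOpen_ball hdiff hinj]
  refine setLIntegral_congr_fun measurableSet_ball fun z hz => ?_
  have hhz := hdiff.differentiableAt (isOpen_ball.mem_nhds hz)
  rw [← enorm_eq_nnnorm, ← Function.comp_def, deriv_comp z (hg _) hhz, enorm_mul, mul_pow,
    mul_comm]

end IsKoenigsMap

def halfStrip (ε : ℝ) : Set ℂ := Ioi 1 ×ℂ Ioo (-ε) ε

section halfStrip

variable {ε : ℝ} {z : ℂ}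

theorem isOpen_halfStrip : IsOpen (halfStrip ε) := isOpen_Ioi.reProdIm isOpen_Ioo

theorem volume_halfStrip (hε : 0 < ε) : volume (halfStrip ε) = ∞ := by
  rw [halfStrip, volume_reProdIm measurableSet_Ioi measurableSet_Ioo, Real.volume_Ioi,
    Real.volume_Ioo, ENNReal.top_mul]
  simpa using hε

theorem one_lt_re_of_mem_halfStrip (hz : z ∈ halfStrip ε) : 1 < z.re := hz.1

theorem abs_im_lt_of_mem_halfStrip (hz : z ∈ halfStrip ε) : |z.im| < ε := abs_lt.2 hz.2

theorem ne_zero_of_mem_halfStrip (hz : z ∈ halfStrip ε) : z ≠ 0 := by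
  rintro rfl
  exact absurd (one_lt_re_of_mem_halfStrip hz) (by norm_num)

theorem neg_le_re_mul_of_mem_halfStrip {μ : ℂ} (hμ : 0 ≤ μ.re) (hz : z ∈ halfStrip ε) :
    -(|μ.im| * ε) ≤ (μ * z).re := by
  have hre : 0 ≤ μ.re * z.re := mul_nonneg hμ (zero_le_one.trans (one_lt_re_of_mem_halfStrip hz).le)
  have him : μ.im * z.im ≤ |μ.im| * ε := calc
    μ.im * z.im ≤ |μ.im| * |z.im| := abs_mul μ.im z.im ▸ le_abs_self _
    _ ≤ |μ.im| * ε := by gcongr; exact (abs_im_lt_of_mem_halfStrip hz).le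
  rw [mul_re]
  linarith

theorem abs_arg_lt_of_mem_halfStrip (hz : z ∈ halfStrip ε) : |arg z| < ε := by
  have hre := one_lt_re_of_mem_halfStrip hz
  have harg : |arg z| < π / 2 := abs_arg_lt_pi_div_two_iff.2 (Or.inl (by linarith))
  calc |arg z| ≤ Real.tan |arg z| := Real.le_tan (abs_nonneg _) harg
    _ = |Real.tan (arg z)| := by
      rcases abs_cases (arg z) with ⟨h, h0⟩ | ⟨h, h0⟩
      · rw [h, abs_of_nonneg (Real.tan_nonneg_of_nonneg_of_le_pi_div_two h0 (h ▸ harg.le))]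
      · rw [h, Real.tan_neg,
          abs_of_neg (Real.tan_neg_of_neg_of_pi_div_two_lt h0 (abs_lt.1 harg).1)]
    _ = |z.im| / z.re := by rw [tan_arg, abs_div, abs_of_pos (by linarith : 0 < z.re)]
    _ ≤ |z.im| := div_le_self (abs_nonneg _) hre.le
    _ < ε := abs_im_lt_of_mem_halfStrip hz

theorem mul_mem_sector_of_mem_halfStrip {c : ℂ} {θ : ℝ} (hc : c ≠ 0) (hθ : θ ≤ π)
    (hεc : ε ≤ arg c) (hεθ : ε ≤ θ - arg c) (hz : z ∈ halfStrip ε) : c * z ∈ sector 0 θ := by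
  have hz0 := ne_zero_of_mem_halfStrip hz
  have harg := abs_lt.1 (abs_arg_lt_of_mem_halfStrip hz)
  have hmul : arg (c * z) = arg c + arg z :=
    arg_mul hc hz0 ⟨by linarith [Real.pi_pos], by linarith⟩
  exact ⟨mul_ne_zero hc hz0, by rw [hmul]; linarith, by rw [hmul]; linarith⟩

end halfStrip

section halfStripInDomain

variable {Ω : Set ℂ}

theorem exists_add_mem_of_mem_halfStrip (hopen : IsOpen Ω) (hconv : ConvexPosDir Ω)
    (hne : Ω.Nonempty) : ∃ q : ℂ, ∃ ε > 0, ∀ z ∈ halfStrip ε, q + z ∈ Ω := by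
  obtain ⟨w, hw⟩ := hne
  obtain ⟨ε, hε, hball⟩ := Metric.isOpen_iff.1 hopen w hw
  refine ⟨w - 1, ε, hε, fun z hz => ?_⟩
  have hvert : w + z.im * I ∈ Ω := hball <| by
    simpa [dist_eq_norm] using abs_im_lt_of_mem_halfStrip hz
  convert hconv (z.re - 1) (by linarith [one_lt_re_of_mem_halfStrip hz]) _ hvert using 1
  apply Complex.ext <;> simp; ring

theorem exists_mul_mem_of_mem_halfStrip {c : ℂ} (hc : 0 < arg c) (hcΩ : arg c < innerArg Ω) :
    ∃ q : ℂ, ∃ ε > 0, ∀ z ∈ halfStrip ε, q + c * z ∈ Ω := by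
  rw [innerArg] at hcΩ
  obtain ⟨θ, hθmem, hθ⟩ := exists_lt_of_lt_csSup (insert_nonempty _ _) hcΩ
  rcases hθmem with rfl | ⟨⟨-, hθπ⟩, q, hq⟩
  · exact absurd hθ hc.not_gt
  have hc0 : c ≠ 0 := fun h => by simp [h] at hc
  exact ⟨q, min (arg c) (θ - arg c), lt_min hc (sub_pos.2 hθ), fun z hz =>
    hq ⟨c * z, mul_mem_sector_of_mem_halfStrip hc0 hθπ (min_le_left _ _) (min_le_right _ _) hz,
      rfl⟩⟩

theorem exists_affine_halfStrip_mem_with_re_mul_nonneg (hopen : IsOpen Ω) (hconv : ConvexPosDir Ω)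
    (hne : Ω.Nonempty) (hinner : innerArg Ω = π) (lam : ℂ) :
    ∃ (q c : ℂ) (ε : ℝ), c ≠ 0 ∧ 0 < ε ∧ (∀ z ∈ halfStrip ε, q + c * z ∈ Ω) ∧
      0 ≤ (lam * c).re := by
  rcases le_or_gt 0 lam.re with hre | hre
  · obtain ⟨q, ε, hε, hsub⟩ := exists_add_mem_of_mem_halfStrip hopen hconv hne
    exact ⟨q, 1, ε, one_ne_zero, hε, by simpa using hsub, by simpa using hre⟩
  · have him : 0 < (-I * conj lam).im := by simpa using hre
    have harg := arg_pos_of_im_pos him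
    obtain ⟨q, ε, hε, hsub⟩ := exists_mul_mem_of_mem_halfStrip harg
      (hinner ▸ arg_lt_pi_iff.2 (Or.inr him.ne'))
    refine ⟨q, -I * conj lam, ε, fun h => by simp [h] at harg, hε, hsub, ?_⟩
    simp [mul_re, mul_comm]

theorem setLIntegral_enorm_mul_cexp_sq_eq_top {lam c q : ℂ} {ε : ℝ} (hlam : lam ≠ 0)
    (hc : c ≠ 0) (hε : 0 < ε) (hsub : ∀ z ∈ halfStrip ε, q + c * z ∈ Ω)
    (hre : 0 ≤ (lam * c).re) :
    ∫⁻ w in Ω, ‖lam * exp (lam * w)‖ₑ ^ 2 = ∞ := by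
  set m := (lam * q).re - |(lam * c).im| * ε
  have hbound (z : ℂ) (hz : z ∈ halfStrip ε) :
      ENNReal.ofReal (Real.exp m) ≤ ‖exp (lam * (q + c * z))‖ₑ := by
    rw [← ofReal_norm, norm_exp]
    refine ENNReal.ofReal_le_ofReal (Real.exp_le_exp.2 ?_)
    have := neg_le_re_mul_of_mem_halfStrip hre hz
    rw [mul_add, add_re, ← mul_assoc]
    linarith
  have hderiv (z : ℂ) : deriv (fun z => q + c * z) z = c := by simp
  have hK : ‖c‖ₑ ^ 2 * (‖lam‖ₑ * ENNReal.ofReal (Real.exp m)) ^ 2 ≠ 0 := by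
    simp [hc, hlam, Real.exp_pos]
  refine eq_top_iff.2 ?_
  calc ∞ = ∫⁻ _ in halfStrip ε, ‖c‖ₑ ^ 2 * (‖lam‖ₑ * ENNReal.ofReal (Real.exp m)) ^ 2 := by
        rw [setLIntegral_const, volume_halfStrip hε, ENNReal.mul_top hK]
    _ ≤ ∫⁻ z in halfStrip ε,
          ‖deriv (fun z => q + c * z) z‖ₑ ^ 2 * ‖lam * exp (lam * (q + c * z))‖ₑ ^ 2 := by
        refine setLIntegral_mono' isOpen_halfStrip.measurableSet fun z hz => ?_
        rw [hderiv, enorm_mul]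
        gcongr
        exact hbound z hz
    _ = ∫⁻ w in (fun z => q + c * z) '' halfStrip ε, ‖lam * exp (lam * w)‖ₑ ^ 2 :=
        (lintegral_image_eq_lintegral_enorm_deriv_sq_mul (isOpen_halfStrip (ε := ε))
          (by fun_prop) (fun a _ b _ h => mul_left_cancel₀ hc (add_left_cancel h))
          (fun w => ‖lam * exp (lam * w)‖ₑ ^ 2)).symm
    _ ≤ ∫⁻ w in Ω, ‖lam * exp (lam * w)‖ₑ ^ 2 := lintegral_mono_set (image_subset_iff.2 hsub)

end halfStripInDomain

theorem dirichlet_spectrum_phs_args_pi_general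
    (Ω : Set ℂ) (hopen : IsOpen Ω)
    (hconv : ConvexPosDir Ω)
    (h : ℂ → ℂ) (hKoenigs : IsKoenigsMap h Ω)
    (hinner : innerArg Ω = Real.pi)
    (lam : ℂ) (hlam : lam ≠ 0) :
    dirichletIntegral (fun z => Complex.exp (lam * h z)) = ⊤ := by
  have hderiv : deriv (fun w => exp (lam * w)) = fun w => lam * exp (lam * w) := by
    ext w
    simpa [mul_comm] using ((hasDerivAt_id w).const_mul lam).cexp.deriv
  rw [hKoenigs.dirichletIntegral_comp (g := fun w => exp (lam * w)) (by fun_prop), hderiv]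
  obtain ⟨q, c, ε, hc, hε, hsub, hre⟩ :=
    exists_affine_halfStrip_mem_with_re_mul_nonneg hopen hconv hKoenigs.nonempty hinner lam
  exact setLIntegral_enorm_mul_cexp_sq_eq_top hlam hc hε hsub hre

/-- **Theorem 1.3(c).** For a parabolic semigroup of positive hyperbolic step with Koenigs domain
`Ω` in the upper half-plane, if `θ_Ω = Θ_Ω = π` then the point spectrum on the Dirichlet space is
`{0}`: `D(e^{λh}) = ∞` for every nonzero `λ`. -/
theorem dirichlet_spectrum_phs_args_pi
    (Ω : Set ℂ) (hopen : IsOpen Ω) (hsc : SimplyConnectedSpace ↥Ω)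
    (hupper : Ω ⊆ {w : ℂ | 0 < w.im})
    (hconv : ConvexPosDir Ω)
    (hnostrip : ∀ a b : ℝ, ¬ Ω ⊆ {w : ℂ | a < w.im ∧ w.im < b})
    (h : ℂ → ℂ) (hKoenigs : IsKoenigsMap h Ω)
    (hinner : innerArg Ω = Real.pi) (houter : outerArg Ω = Real.pi)
    (lam : ℂ) (hlam : lam ≠ 0) :
    dirichletIntegral (fun z => Complex.exp (lam * h z)) = ⊤ :=
  dirichlet_spectrum_phs_args_pi_general Ω hopen hconv h hKoenigs hinner lam hlam
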